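/- If an ancillary statistic U for model M is not a function of some maximal ancillary V (i.e. (U,V) is not ancillary while V is maximal), then U is not a strong ancillary for M. -/

import Mathlib

open Finset
open scoped Classical

variable {X : Type*} [Fintype X] {Θ : Type*}

/-- Marginal distribution of the statistic `U` under `P θ`. -/
noncomputable def margin {I : Type*} (P : Θ → X → ℝ) (U : X → I) (θ : Θ) (i : I) : ℝ :=
  ∑ x ∈ Finset.univ.filter (fun x => U x = i), P θ x

/-- `P` is a statistical model: each `P θ` is a probability distribution on `X`. -/
def IsModel (P : Θ → X → ℝ) : Prop :=
  (∀ θ x, 0 ≤ P θ x) ∧ ∀ θ, ∑ x, P θ x = 1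

/-- A statistic is ancillary when its marginal distribution is parameter free. -/
def Ancillary {I : Type*} (P : Θ → X → ℝ) (U : X → I) : Prop :=
  ∀ θ₁ θ₂ i, margin P U θ₁ i = margin P U θ₂ i

/-- The mixture model `Σ_i p_i M_{|V=i}` (as a density on `X`). -/
noncomputable def mix (P : Θ → X → ℝ) (V : X → ℕ) (p : ℕ → ℝ) : Θ → X → ℝ :=
  fun θ x => p (V x) * (P θ x / margin P V θ (V x))

/-- `p` is a probability distribution on the values of `V`, supported where `P_V > 0`. -/
def ProbWts (P : Θ → X → ℝ) (V : X → ℕ) (p : ℕ → ℝ) : Prop :=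
  (∀ i, 0 ≤ p i) ∧ (∑' i, p i) = 1 ∧ ∀ θ i, 0 < p i → 0 < margin P V θ i

/-- `U` is stable: changing the distribution of any other ancillary leaves `U` ancillary. -/
def StableAnc (P : Θ → X → ℝ) (U : X → ℕ) : Prop :=
  Ancillary P U ∧ ∀ (V : X → ℕ) (p : ℕ → ℝ),
    Ancillary P V → ProbWts P V p → Ancillary (mix P V p) U

/-- `U` is strong: changing the distribution of `U` leaves every ancillary ancillary. -/
def StrongAnc (P : Θ → X → ℝ) (U : X → ℕ) : Prop :=
  Ancillary P U ∧ ∀ (V : X → ℕ) (p : ℕ → ℝ),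
    Ancillary P V → ProbWts P U p → Ancillary (mix P U p) V

/-- `U` is a function of `V`. -/
def FunctionOf {I J : Type*} (U : X → I) (V : X → J) : Prop :=
  ∃ h : J → I, ∀ x, U x = h (V x)

/-- A maximal ancillary: any ancillary of which it is a function is a 1-1 relabelling. -/
def MaximalAnc (P : Θ → X → ℝ) (V : X → ℕ) : Prop :=
  Ancillary P V ∧ ∀ W : X → ℕ, Ancillary P W → FunctionOf V W →
    ∀ x y, V x = V y → W x = W y

/-- A minimal ancillary: a function of every maximal ancillary. -/
def MinimalAnc (P : Θ → X → ℝ) (U : X → ℕ) : Prop :=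
  Ancillary P U ∧ ∀ V : X → ℕ, MaximalAnc P V → FunctionOf U V

/-! Reweighting the model by the point mass at a value `i` of `U` turns the law of `V` into
the conditional law of `V` given `U = i`, i.e. `P_{(U,V)}(i, ·) / P_U(i)`. If `U` is strong this
is parameter free, and since `P_U(i)` is parameter free too, so is `P_{(U,V)}(i, ·)`; when
`P_U(i) = 0` the pair has probability `0` at `(i, j)` for every parameter. -/

lemma margin_nonneg {I : Type*} {P : Θ → X → ℝ} (hP : ∀ θ x, 0 ≤ P θ x) (U : X → I)
    (θ : Θ) (i : I) : 0 ≤ margin P U θ i :=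
  Finset.sum_nonneg fun x _ => hP θ x

lemma margin_pair_le {I J : Type*} {P : Θ → X → ℝ} (hP : ∀ θ x, 0 ≤ P θ x)
    (U : X → I) (V : X → J) (θ : Θ) (i : I) (j : J) :
    margin P (fun x => (U x, V x)) θ (i, j) ≤ margin P U θ i :=
  Finset.sum_le_sum_of_subset_of_nonneg (fun x hx => by simp_all) fun x _ _ => hP θ x

lemma margin_pair_eq_zero {I J : Type*} {P : Θ → X → ℝ} (hP : ∀ θ x, 0 ≤ P θ x)
    (U : X → I) (V : X → J) {θ : Θ} {i : I} (hi : margin P U θ i = 0) (j : J) :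
    margin P (fun x => (U x, V x)) θ (i, j) = 0 :=
  le_antisymm (hi ▸ margin_pair_le hP U V θ i j) (margin_nonneg hP _ θ _)

lemma probWts_ite_eq {P : Θ → X → ℝ} {U : X → ℕ} {i : ℕ} (hi : ∀ θ, 0 < margin P U θ i) :
    ProbWts P U (fun k => if k = i then 1 else 0) := by
  refine ⟨fun k => by positivity, tsum_ite_eq i (fun _ => (1 : ℝ)), fun θ k hk => ?_⟩
  obtain rfl : k = i := by by_contra hki; simp [hki] at hk
  exact hi θ

lemma mix_ite_eq_apply (P : Θ → X → ℝ) (U : X → ℕ) (i : ℕ) (θ : Θ) (x : X) :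
    mix P U (fun k => if k = i then 1 else 0) θ x
      = if U x = i then P θ x / margin P U θ i else 0 := by
  by_cases hU : U x = i <;> simp [mix, hU]

lemma margin_mix_ite_eq {J : Type*} (P : Θ → X → ℝ) (U : X → ℕ) (V : X → J)
    (θ : Θ) (i : ℕ) (j : J) :
    margin (mix P U (fun k => if k = i then 1 else 0)) V θ j
      = margin P (fun x => (U x, V x)) θ (i, j) / margin P U θ i := by
  rw [margin, margin, Finset.sum_filter, Finset.sum_filter, Finset.sum_div]
  refine Finset.sum_congr rfl fun x _ => ?_
  by_cases hU : U x = i <;> by_cases hV : V x = j <;> simp [mix_ite_eq_apply, hU, hV]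

lemma ancillary_pair_of_strongAnc {P : Θ → X → ℝ} (hP : ∀ θ x, 0 ≤ P θ x) {U V : X → ℕ}
    (hU : StrongAnc P U) (hV : Ancillary P V) :
    Ancillary P (fun x => (U x, V x)) := by
  rintro θ₁ θ₂ ⟨i, j⟩
  rcases (margin_nonneg hP U θ₁ i).eq_or_lt with hi | hi
  · rw [margin_pair_eq_zero hP U V hi.symm, margin_pair_eq_zero hP U V (hU.1 θ₂ θ₁ i ▸ hi.symm)]
  · have hi' : ∀ θ, 0 < margin P U θ i := fun θ => hU.1 θ₁ θ i ▸ hi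
    have hmix := hU.2 V _ hV (probWts_ite_eq hi') θ₁ θ₂ j
    rwa [margin_mix_ite_eq, margin_mix_ite_eq, hU.1 θ₁ θ₂ i,
      div_left_inj' (hi' θ₂).ne'] at hmix

theorem not_strong_of_pair_not_ancillary_general (P : Θ → X → ℝ) (hP : IsModel P)
    (U V : X → ℕ) (hV : MaximalAnc P V)
    (hpair : ¬ Ancillary P (fun x => (U x, V x))) :
    ¬ StrongAnc P U :=
  fun hU => hpair (ancillary_pair_of_strongAnc hP.1 hU hV.1)

/-- If ancillary `U` is not a function of the maximal ancillary `V`, in the sense that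
the pair `(U, V)` is not ancillary while `V` is maximal, then `U` is not strong. -/
theorem not_strong_of_pair_not_ancillary (P : Θ → X → ℝ) (hP : IsModel P)
    (U V : X → ℕ) (hU : Ancillary P U) (hV : MaximalAnc P V)
    (hpair : ¬ Ancillary P (fun x => (U x, V x))) :
    ¬ StrongAnc P U :=
  not_strong_of_pair_not_ancillary_general P hP U V hV hpair
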